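/- Let t, x, s ∈ ℂ with Im(t) > 0, Re(x) > 0, Im(x) > 0, and Re(s) > 0. Then the function u ↦ u^(s−1) e^(2πi(t+u)x) / (1 − e^(2πi(t+u))) is integrable on (0, ∞), and L(t,x,s) = (2π)^s e^(−iπ(s/2 + 2tx)) · (1/Γ(s)) ∫_0^∞ u^(s−1) e^(2πi(t+u)x) / (1 − e^(2πi(t+u))) du, where (2π)^s is defined by the principal branch. -/

import Mathlib

/-!
Since `‖e^{2πi(t+u)}‖ = e^{-2π Im t} < 1`, expanding `1 / (1 - e^{2πi(t+u)})` as a geometric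
series and integrating term by term (the integrals of the absolute values of the terms decay
geometrically) writes the integral as `∑ₘ ∫₀^∞ u^{s-1} e^{2πi(t+u)(m+x)} du`. Each of these is a
Gamma integral `∫₀^∞ u^{s-1} e^{-bu} du = Γ(s) b^{-s}` with the complex rate `b = -2πi(m+x)`,
`Re b = 2π Im x > 0`; for complex `b` this follows from the real case by analytic continuation
in `b`. On the principal branch `(-2πiw)^{-s} = (2π)^{-s} e^{iπs/2} w^{-s}` when `Im w > 0`, and
the prefactor cancels the constants.
-/

open MeasureTheory

/-- The Lerch zeta function, defined by its (absolutely convergent, for `Im t > 0` and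
`Re x > 0`) series, with all complex powers taken with the principal branch. -/
noncomputable def lerchZeta (t x s : ℂ) : ℂ :=
  ∑' m : ℕ, ((m : ℂ) + x) ^ (-s) * Complex.exp (2 * Real.pi * Complex.I * t * m)

open Set Complex Filter Topology
open scoped Real

lemma norm_cpow_mul_cexp_neg_mul (s b : ℂ) {u : ℝ} (hu : 0 < u) :
    ‖(u : ℂ) ^ (s - 1) * cexp (-(b * u))‖ = u ^ (s.re - 1) * rexp (-(b.re * u)) := by
  rw [norm_mul, norm_exp, norm_cpow_eq_rpow_re_of_pos hu]
  simp

lemma continuousOn_ofReal_cpow_const (s : ℂ) :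
    ContinuousOn (fun u : ℝ => (u : ℂ) ^ s) (Ioi 0) := fun _ hu =>
  ((continuousAt_cpow_const (ofReal_mem_slitPlane.2 hu)).comp
    continuous_ofReal.continuousAt).continuousWithinAt

lemma aestronglyMeasurable_cpow_mul_cexp_neg_mul (s b : ℂ) :
    AEStronglyMeasurable (fun u : ℝ => (u : ℂ) ^ (s - 1) * cexp (-(b * u)))
      (volume.restrict (Ioi 0)) :=
  ((continuousOn_ofReal_cpow_const _).mul (by fun_prop : Continuous fun u : ℝ =>
    cexp (-(b * u))).continuousOn).aestronglyMeasurable measurableSet_Ioi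

lemma integrableOn_cpow_mul_cexp_neg_mul {s b : ℂ} (hs : 0 < s.re) (hb : 0 < b.re) :
    IntegrableOn (fun u : ℝ => (u : ℂ) ^ (s - 1) * cexp (-(b * u))) (Ioi 0) := by
  have hreal : IntegrableOn (fun u : ℝ => u ^ (s.re - 1) * rexp (-(b.re * u))) (Ioi 0) := by
    simpa using integrableOn_rpow_mul_exp_neg_mul_rpow (by linarith) zero_lt_one hb
  refine hreal.mono' (aestronglyMeasurable_cpow_mul_cexp_neg_mul s b) ?_
  filter_upwards [ae_restrict_mem measurableSet_Ioi] with u hu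
  exact (norm_cpow_mul_cexp_neg_mul s b hu).le

lemma differentiableOn_integral_cpow_mul_cexp_neg_mul {s : ℂ} (hs : 0 < s.re) :
    DifferentiableOn ℂ (fun b : ℂ => ∫ u in Ioi (0 : ℝ), (u : ℂ) ^ (s - 1) * cexp (-(b * u)))
      {b | 0 < b.re} := by
  intro b hb
  refine DifferentiableAt.differentiableWithinAt ?_
  have hε : 0 < b.re / 2 := half_pos hb
  have hball : ∀ c ∈ Metric.ball b (b.re / 2), b.re / 2 < c.re := fun c hc => by
    have := (abs_re_le_norm (c - b)).trans_lt (mem_ball_iff_norm.mp hc)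
    rw [sub_re] at this
    linarith [abs_lt.mp this]
  have hbound : IntegrableOn (fun u : ℝ => u ^ s.re * rexp (-(b.re / 2 * u))) (Ioi 0) := by
    simpa using integrableOn_rpow_mul_exp_neg_mul_rpow (by linarith) zero_lt_one hε
  refine (hasDerivAt_integral_of_dominated_loc_of_deriv_le
    (F' := fun c (u : ℝ) => (u : ℂ) ^ (s - 1) * cexp (-(c * u)) * -(u : ℂ))
    (Metric.ball_mem_nhds b hε)
    (.of_forall fun c => aestronglyMeasurable_cpow_mul_cexp_neg_mul s c)
    (integrableOn_cpow_mul_cexp_neg_mul hs hb)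
    ((aestronglyMeasurable_cpow_mul_cexp_neg_mul s b).mul
      continuous_ofReal.neg.aestronglyMeasurable) ?_ hbound ?_).2.differentiableAt
  · filter_upwards [ae_restrict_mem measurableSet_Ioi] with u (hu : 0 < u) c hc
    rw [norm_mul, norm_cpow_mul_cexp_neg_mul s c hu, norm_neg, norm_real, Real.norm_of_nonneg hu.le,
      mul_right_comm, ← Real.rpow_add_one hu.ne', sub_add_cancel]
    gcongr
    nlinarith [hball c hc]
  · refine .of_forall fun u c _ => ?_
    exact ((hasDerivAt_mul_const (u : ℂ)).neg.cexp).const_mul _ |>.congr_deriv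
      (by simp only [Pi.neg_apply]; ring)

lemma integral_cpow_mul_cexp_neg_mul_Ioi {s b : ℂ} (hs : 0 < s.re) (hb : 0 < b.re) :
    ∫ u in Ioi (0 : ℝ), (u : ℂ) ^ (s - 1) * cexp (-(b * u)) = Gamma s * b ^ (-s) := by
  have hU : IsOpen {b : ℂ | 0 < b.re} := isOpen_lt continuous_const continuous_re
  have hGamma : AnalyticOnNhd ℂ (fun b : ℂ => Gamma s * b ^ (-s)) {b | 0 < b.re} :=
    DifferentiableOn.analyticOnNhd (fun c hc =>
      ((differentiableAt_id.cpow_const (Or.inl hc)).const_mul _).differentiableWithinAt) hU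
  have hreal : ∀ᶠ r : ℝ in 𝓝[≠] 1, ∫ u in Ioi (0 : ℝ), (u : ℂ) ^ (s - 1) * cexp (-(r * u)) =
      Gamma s * (r : ℂ) ^ (-s) := by
    filter_upwards [nhdsWithin_le_nhds (lt_mem_nhds one_pos)] with r (hr : 0 < r)
    rw [Complex.integral_cpow_mul_exp_neg_mul_Ioi hs hr, one_div,
      inv_cpow _ _ (arg_ofReal_of_nonneg hr.le ▸ Real.pi_ne_zero.symm), ← cpow_neg, mul_comm]
  have hofReal : Tendsto ((↑) : ℝ → ℂ) (𝓝[≠] 1) (𝓝[≠] 1) :=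
    continuous_ofReal.continuousWithinAt.tendsto_nhdsWithin fun r hr => by simpa using hr
  have hintegral := (differentiableOn_integral_cpow_mul_cexp_neg_mul hs).analyticOnNhd hU
  exact hintegral.eqOn_of_preconnected_of_frequently_eq hGamma
    (convex_halfSpace_re_gt 0).isPreconnected (by simp) (hofReal.frequently hreal.frequently) hb

lemma neg_ofReal_mul_I_mul_cpow {r : ℝ} (hr : 0 < r) {z : ℂ} (hz : -(π / 2) < z.arg) (w : ℂ) :
    (-(r * I * z)) ^ w = (r : ℂ) ^ w * cexp (-(π / 2 * I * w)) * z ^ w := by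
  rcases eq_or_ne z 0 with rfl | hz0
  · rcases eq_or_ne w 0 with rfl | hw <;> simp [*]
  have hIz : -I * z ≠ 0 := mul_ne_zero (neg_ne_zero.2 I_ne_zero) hz0
  have hlog : log (-I * z) = -(π / 2) * I + log z := by
    rw [log_mul (neg_ne_zero.2 I_ne_zero) hz0 ⟨by linarith [arg_neg_I], by
      linarith [arg_neg_I, arg_le_pi z, Real.pi_pos]⟩, log_neg_I]
  rw [show -(r * I * z) = r * (-I * z) by ring, cpow_def_of_ne_zero (by simpa [hr.ne'] using hIz),
    cpow_def_of_ne_zero (ofReal_ne_zero.2 hr.ne'), cpow_def_of_ne_zero hz0,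
    log_ofReal_mul hr hIz, hlog, ← exp_add, ← exp_add, ofReal_log hr.le]
  ring_nf

section GeometricSeries

variable {α : Type*} [MeasurableSpace α] {μ : Measure α} {G q : α → ℂ} {r : ℝ}

lemma integrable_div_one_sub (hG : Integrable G μ) (hq : AEStronglyMeasurable q μ) (hr : r < 1)
    (hqr : ∀ᵐ a ∂μ, ‖q a‖ ≤ r) : Integrable (fun a => G a / (1 - q a)) μ := by
  simp_rw [div_eq_inv_mul]
  refine hG.bdd_mul (c := (1 - r)⁻¹)
    ((hq.aemeasurable.const_sub 1).inv.aestronglyMeasurable) ?_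
  filter_upwards [hqr] with a ha
  rw [norm_inv]
  have : 1 - r ≤ ‖1 - q a‖ := by
    linarith [norm_sub_norm_le (1 : ℂ) (q a), norm_one (α := ℂ)]
  gcongr

lemma hasSum_integral_mul_pow (hG : Integrable G μ) (hq : AEStronglyMeasurable q μ) (hr : r < 1)
    (hqr : ∀ᵐ a ∂μ, ‖q a‖ ≤ r) :
    HasSum (fun m : ℕ => ∫ a, G a * q a ^ m ∂μ) (∫ a, G a / (1 - q a) ∂μ) := by
  obtain ⟨ρ, hρ₀, hρ, hqρ⟩ : ∃ ρ, 0 ≤ ρ ∧ ρ < 1 ∧ ∀ᵐ a ∂μ, ‖q a‖ ≤ ρ :=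
    ⟨max r 0, le_max_right _ _, max_lt hr one_pos, hqr.mono fun a h => h.trans (le_max_left _ _)⟩
  have hpow : ∀ m : ℕ, ∀ᵐ a ∂μ, ‖q a ^ m‖ ≤ ρ ^ m := fun m => hqρ.mono fun a h => by
    rw [norm_pow]; exact pow_le_pow_left₀ (norm_nonneg _) h m
  have hint : ∀ m : ℕ, Integrable (fun a => G a * q a ^ m) μ := fun m =>
    hG.mul_bdd (hq.pow m) (hpow m)
  have hsum : Summable fun m : ℕ => ∫ a, ‖G a * q a ^ m‖ ∂μ := by
    refine Summable.of_nonneg_of_le (fun m => integral_nonneg fun a => norm_nonneg _)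
      (fun m => ?_) ((summable_geometric_of_lt_one hρ₀ hρ).mul_left (∫ a, ‖G a‖ ∂μ))
    rw [← integral_mul_const (μ := μ) (ρ ^ m) fun a => ‖G a‖]
    refine integral_mono_ae (hint m).norm (hG.norm.mul_const _) ?_
    filter_upwards [hpow m] with a ha
    rw [norm_mul]
    exact mul_le_mul_of_nonneg_left ha (norm_nonneg _)
  have hgeom : ∫ a, G a / (1 - q a) ∂μ = ∫ a, ∑' m : ℕ, G a * q a ^ m ∂μ := by
    refine integral_congr_ae ?_
    filter_upwards [hqρ] with a ha
    rw [div_eq_mul_inv, ((hasSum_geometric_of_norm_lt_one (ha.trans_lt hρ)).mul_left (G a)).tsum_eq]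
  rw [hgeom]
  exact hasSum_integral_of_summable_integral_norm hint hsum

end GeometricSeries

lemma cpow_mul_cexp_two_pi_I_mul_add (s t w : ℂ) (u : ℝ) :
    (u : ℂ) ^ (s - 1) * cexp (2 * π * I * (t + u) * w) =
      cexp (2 * π * I * t * w) * ((u : ℂ) ^ (s - 1) * cexp (-(-(2 * π * I * w) * u))) := by
  rw [mul_left_comm, ← exp_add]
  ring_nf

lemma integrableOn_cpow_mul_cexp_two_pi_I_mul {s w : ℂ} (hs : 0 < s.re) (hw : 0 < w.im)
    (t : ℂ) :
    IntegrableOn (fun u : ℝ => (u : ℂ) ^ (s - 1) * cexp (2 * π * I * (t + u) * w)) (Ioi 0) := by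
  simp_rw [cpow_mul_cexp_two_pi_I_mul_add]
  exact (integrableOn_cpow_mul_cexp_neg_mul hs
    (by simpa using mul_pos Real.two_pi_pos hw)).const_mul _

lemma integral_cpow_mul_cexp_two_pi_I_mul {s w : ℂ} (hs : 0 < s.re) (hw : 0 < w.im) (t : ℂ) :
    ∫ u in Ioi (0 : ℝ), (u : ℂ) ^ (s - 1) * cexp (2 * π * I * (t + u) * w) =
      Gamma s * (2 * π) ^ (-s) * cexp (π / 2 * I * s) * cexp (2 * π * I * t * w) * w ^ (-s) := by
  have hpow := neg_ofReal_mul_I_mul_cpow Real.two_pi_pos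
    (by linarith [arg_nonneg_iff.2 hw.le, Real.pi_pos] : -(π / 2) < w.arg) (-s)
  push_cast at hpow
  simp_rw [cpow_mul_cexp_two_pi_I_mul_add, integral_const_mul]
  rw [integral_cpow_mul_cexp_neg_mul_Ioi hs (by simpa using mul_pos Real.two_pi_pos hw), hpow]
  simp only [mul_neg, neg_neg]
  ring

lemma two_pi_cpow_mul_cexp_mul_inv_gamma_mul {s : ℂ} (hs : 0 < s.re) (t x n : ℂ) :
    (2 * π : ℂ) ^ s * cexp (-(I * π * (s / 2 + 2 * t * x))) * (1 / Gamma s *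
      (Gamma s * (2 * π) ^ (-s) * cexp (π / 2 * I * s) * cexp (2 * π * I * t * (n + x)) *
        (n + x) ^ (-s))) = (n + x) ^ (-s) * cexp (2 * π * I * t * n) := by
  have h2π : (2 * π : ℂ) ^ s * (2 * π) ^ (-s) = 1 := by
    rw [← cpow_add _ _ (by exact_mod_cast Real.two_pi_pos.ne'), add_neg_cancel, cpow_zero]
  have hexp : cexp (-(I * π * (s / 2 + 2 * t * x))) * cexp (π / 2 * I * s) *
      cexp (2 * π * I * t * (n + x)) = cexp (2 * π * I * t * n) := by
    rw [← exp_add, ← exp_add]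
    ring_nf
  calc _ = ((2 * π : ℂ) ^ s * (2 * π) ^ (-s)) * ((Gamma s)⁻¹ * Gamma s) *
          (cexp (-(I * π * (s / 2 + 2 * t * x))) * cexp (π / 2 * I * s) *
            cexp (2 * π * I * t * (n + x))) * (n + x) ^ (-s) := by ring
    _ = _ := by
        rw [h2π, inv_mul_cancel₀ (Gamma_ne_zero_of_re_pos hs), hexp]
        ring

theorem lerch_eq_weyl_fracint_general (t x s : ℂ) (ht : 0 < t.im)
    (hx' : 0 < x.im) (hs : 0 < s.re) :
    IntegrableOn
      (fun u : ℝ => (u : ℂ) ^ (s - 1) *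
        Complex.exp (2 * Real.pi * Complex.I * (t + u) * x) /
          (1 - Complex.exp (2 * Real.pi * Complex.I * (t + u))))
      (Set.Ioi 0) ∧
    lerchZeta t x s
      = (2 * Real.pi : ℂ) ^ s * Complex.exp (-(Complex.I * Real.pi * (s / 2 + 2 * t * x))) *
        ((1 / Complex.Gamma s) *
          ∫ u in Set.Ioi (0 : ℝ),
            (u : ℂ) ^ (s - 1) * Complex.exp (2 * Real.pi * Complex.I * (t + u) * x) /
              (1 - Complex.exp (2 * Real.pi * Complex.I * (t + u)))) := by
  set G : ℝ → ℂ := fun u => (u : ℂ) ^ (s - 1) * cexp (2 * π * I * (t + u) * x)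
  set q : ℝ → ℂ := fun u => cexp (2 * π * I * (t + u))
  have hG : IntegrableOn G (Ioi 0) := integrableOn_cpow_mul_cexp_two_pi_I_mul hs hx' t
  have hq : AEStronglyMeasurable q (volume.restrict (Ioi 0)) :=
    (by fun_prop : Continuous q).aestronglyMeasurable
  have hqr : ∀ᵐ u ∂(volume.restrict (Ioi 0)), ‖q u‖ ≤ rexp (-(2 * π * t.im)) :=
    .of_forall fun u => by simp [q, norm_exp]
  have hr : rexp (-(2 * π * t.im)) < 1 := Real.exp_lt_one_iff.2 (by nlinarith [Real.pi_pos])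
  have hterm : ∀ m : ℕ, ∫ u in Ioi (0 : ℝ), G u * q u ^ m =
      Gamma s * (2 * π) ^ (-s) * cexp (π / 2 * I * s) * cexp (2 * π * I * t * (m + x)) *
        ((m : ℂ) + x) ^ (-s) := fun m => by
    rw [← integral_cpow_mul_cexp_two_pi_I_mul hs (by simpa using hx') t]
    congr 1 with u
    rw [mul_assoc, ← exp_nat_mul, ← exp_add]
    ring_nf
  refine ⟨integrable_div_one_sub hG hq hr hqr, ?_⟩
  rw [← (hasSum_integral_mul_pow hG hq hr hqr).tsum_eq, lerchZeta, tsum_congr hterm,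
    ← tsum_mul_left, ← tsum_mul_left]
  exact tsum_congr fun m => (two_pi_cpow_mul_cexp_mul_inv_gamma_mul hs t x m).symm

theorem lerch_eq_weyl_fracint (t x s : ℂ) (ht : 0 < t.im) (hx : 0 < x.re)
    (hx' : 0 < x.im) (hs : 0 < s.re) :
    IntegrableOn
      (fun u : ℝ => (u : ℂ) ^ (s - 1) *
        Complex.exp (2 * Real.pi * Complex.I * (t + u) * x) /
          (1 - Complex.exp (2 * Real.pi * Complex.I * (t + u))))
      (Set.Ioi 0) ∧
    lerchZeta t x s
      = (2 * Real.pi : ℂ) ^ s * Complex.exp (-(Complex.I * Real.pi * (s / 2 + 2 * t * x))) *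
        ((1 / Complex.Gamma s) *
          ∫ u in Set.Ioi (0 : ℝ),
            (u : ℂ) ^ (s - 1) * Complex.exp (2 * Real.pi * Complex.I * (t + u) * x) /
              (1 - Complex.exp (2 * Real.pi * Complex.I * (t + u)))) :=
  lerch_eq_weyl_fracint_general t x s ht hx' hs
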